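/- arXiv:2112.02669 — 2 statements merged into one kernel-verified Lean document; each statement's English description precedes it below -/
import Mathlib

section
/- Let α ∈ (0,1), t₀ < t₁, and q ∈ [1, 1/(1-α)). Then for every f ∈ L^1(t₀,t₁;ℝ), ‖J^α f‖_{L^q(t₀,t₁)} ≤ K_{α,1} ((t₁-t₀)^{1-q(1-α)} / (1-q(1-α)))^{1/q} ‖f‖_{L^1(t₀,t₁)}, where K_{α,1} = 2/(α^{1-α} Γ(α)). -/
/-!
Extending the kernel `(t - s) ^ (α - 1)` by zero for `s ≥ t` writes `J^α f (t)` as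
`Γ(α)⁻¹ ∫ k (t - s) f s ds` over the whole interval. Hölder's inequality for the weight `|f|` gives
`|∫ k (t - s) f s ds| ^ q ≤ (∫ k (t - s) ^ q |f s| ds) ‖f‖₁ ^ (q - 1)`; integrating in `t` and
swapping the integrals, it remains to bound `∫ k (t - s) ^ q dt` uniformly in `s`, and this is at
most `∫₀^{t₁ - t₀} x ^ (q (α - 1)) dx = (t₁ - t₀) ^ γ / γ` with `γ = 1 - q (1 - α) > 0`.
The resulting constant `1 / Γ(α)` is at most `2 / (α ^ (1 - α) Γ(α))`.
-/

open MeasureTheory Set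
open scoped ENNReal

noncomputable def RL (α t₀ : ℝ) (f : ℝ → ℝ) (t : ℝ) : ℝ :=
  (1 / Real.Gamma α) * ∫ s in t₀..t, (t - s) ^ (α - 1) * f s

section

variable {X Y : Type*} [MeasurableSpace X] [MeasurableSpace Y] {μ : Measure X} {ν : Measure Y}

theorem rpow_lintegral_mul_le_lintegral_rpow_mul {q : ℝ} (hq : 1 ≤ q) {K g : Y → ℝ≥0∞}
    (hK : AEMeasurable K ν) (hg : AEMeasurable g ν) :
    (∫⁻ y, K y * g y ∂ν) ^ q ≤ (∫⁻ y, K y ^ q * g y ∂ν) * (∫⁻ y, g y ∂ν) ^ (q - 1) := by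
  rcases hq.eq_or_lt with rfl | hq
  · simp
  have hq0 : 0 < q := zero_lt_one.trans hq
  set p := q.conjExponent
  have hpq : q.HolderConjugate p := .conjExponent hq
  -- Hölder's inequality for the measure with density `g`, in exponents `q` and `p`.
  have hsplit : ∀ y, K y * g y = (K y ^ q * g y) ^ (1 / q) * g y ^ (1 / p) := fun y => by
    rw [ENNReal.mul_rpow_of_nonneg _ _ (by positivity), ← ENNReal.rpow_mul,
      mul_one_div_cancel hq0.ne', ENNReal.rpow_one, mul_assoc,
      ← ENNReal.rpow_add_of_nonneg _ _ (by positivity) (one_div_pos.2 hpq.symm.pos).le,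
      hpq.one_div_add_one_div, div_one, ENNReal.rpow_one]
  have hHolder := ENNReal.lintegral_mul_le_Lp_mul_Lq ν hpq
    (((hK.pow_const q).mul hg).pow_const (1 / q)) (hg.pow_const (1 / p))
  simp only [Pi.mul_apply, ← ENNReal.rpow_mul, one_div_mul_cancel hq0.ne',
    one_div_mul_cancel hpq.symm.ne_zero, ENNReal.rpow_one, ← hsplit] at hHolder
  calc (∫⁻ y, K y * g y ∂ν) ^ q
      ≤ ((∫⁻ y, K y ^ q * g y ∂ν) ^ (1 / q) * (∫⁻ y, g y ∂ν) ^ (1 / p)) ^ q := by gcongr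
    _ = (∫⁻ y, K y ^ q * g y ∂ν) * (∫⁻ y, g y ∂ν) ^ (q - 1) := by
      rw [ENNReal.mul_rpow_of_nonneg _ _ hq0.le, ← ENNReal.rpow_mul, ← ENNReal.rpow_mul,
        one_div_mul_cancel hq0.ne', ENNReal.rpow_one, one_div, ← div_eq_inv_mul,
        hpq.div_conj_eq_sub_one]

theorem lintegral_rpow_lintegral_mul_le [SFinite μ] [SFinite ν] {q : ℝ} (hq : 1 ≤ q)
    {K : X → Y → ℝ≥0∞} (hK : Measurable (Function.uncurry K)) {g : Y → ℝ≥0∞}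
    (hg : AEMeasurable g ν) {C : ℝ≥0∞} (hC : ∀ᵐ y ∂ν, ∫⁻ x, K x y ^ q ∂μ ≤ C) :
    ∫⁻ x, (∫⁻ y, K x y * g y ∂ν) ^ q ∂μ ≤ C * (∫⁻ y, g y ∂ν) ^ q := by
  have hKg : AEMeasurable (Function.uncurry fun x y => K x y ^ q * g y) (μ.prod ν) :=
    (hK.pow_const q).aemeasurable.mul
      (hg.comp_quasiMeasurePreserving Measure.quasiMeasurePreserving_snd)
  calc ∫⁻ x, (∫⁻ y, K x y * g y ∂ν) ^ q ∂μ
      ≤ ∫⁻ x, (∫⁻ y, K x y ^ q * g y ∂ν) * (∫⁻ y, g y ∂ν) ^ (q - 1) ∂μ := by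
        refine lintegral_mono fun x => rpow_lintegral_mul_le_lintegral_rpow_mul hq ?_ hg
        exact (hK.comp measurable_prodMk_left).aemeasurable
    _ = (∫⁻ y, (∫⁻ x, K x y ^ q ∂μ) * g y ∂ν) * (∫⁻ y, g y ∂ν) ^ (q - 1) := by
        have hx : AEMeasurable (fun x => ∫⁻ y, K x y ^ q * g y ∂ν) μ := hKg.lintegral_prod_right'
        rw [lintegral_mul_const'' _ hx, lintegral_lintegral_swap hKg]
        congr 1
        exact lintegral_congr fun y =>
          lintegral_mul_const _ ((hK.comp measurable_prodMk_right).pow_const q)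
    _ ≤ (∫⁻ y, C * g y ∂ν) * (∫⁻ y, g y ∂ν) ^ (q - 1) := by
        gcongr ?_ * _
        exact lintegral_mono_ae (hC.mono fun y hy => by gcongr)
    _ = C * (∫⁻ y, g y ∂ν) ^ q := by
        conv_rhs => rw [show q = 1 + (q - 1) by ring,
          ENNReal.rpow_add_of_nonneg _ _ zero_le_one (by linarith), ENNReal.rpow_one]
        rw [lintegral_const_mul'' _ hg, mul_assoc]

end

noncomputable def rlKernel (a : ℝ) : ℝ → ℝ := (Ioi 0).indicator (· ^ a)

theorem measurable_rlKernel (a : ℝ) : Measurable (rlKernel a) :=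
  (measurable_id.pow_const a).indicator measurableSet_Ioi

theorem enorm_rlKernel_rpow {q : ℝ} (hq : 0 < q) (a x : ℝ) :
    ‖rlKernel a x‖ₑ ^ q = ‖rlKernel (a * q) x‖ₑ := by
  by_cases hx : 0 < x
  · simp only [rlKernel, indicator_of_mem (mem_Ioi.2 hx)]
    rw [Real.enorm_of_nonneg (by positivity), Real.enorm_of_nonneg (by positivity),
      ENNReal.ofReal_rpow_of_nonneg (by positivity) hq.le, Real.rpow_mul hx.le]
  · simp [rlKernel, hx, ENNReal.zero_rpow_of_pos hq]

theorem setLIntegral_enorm_rlKernel_Ioc {b : ℝ} (hb : -1 < b) {T : ℝ} (hT : 0 ≤ T) :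
    ∫⁻ x in Ioc 0 T, ‖rlKernel b x‖ₑ = ENNReal.ofReal (T ^ (b + 1) / (b + 1)) := by
  have hpow : ∫⁻ x in Ioc 0 T, ‖rlKernel b x‖ₑ = ∫⁻ x in Ioc 0 T, ENNReal.ofReal (x ^ b) :=
    setLIntegral_congr_fun measurableSet_Ioc fun x hx => by
      rw [rlKernel, indicator_of_mem (mem_Ioi.2 hx.1),
        Real.enorm_of_nonneg (Real.rpow_nonneg hx.1.le _)]
  rw [hpow, ← ofReal_integral_eq_lintegral_ofReal (intervalIntegral.intervalIntegrable_rpow' hb).1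
      (ae_restrict_of_forall_mem measurableSet_Ioc fun x hx => Real.rpow_nonneg hx.1.le _),
    ← intervalIntegral.integral_of_le hT, integral_rpow (Or.inl hb),
    Real.zero_rpow (by linarith), sub_zero]

theorem setLIntegral_enorm_rlKernel_sub_le {b : ℝ} (hb : -1 < b) {t₀ t₁ s : ℝ} (ht : t₀ ≤ t₁)
    (hs : t₀ ≤ s) :
    ∫⁻ t in Ioc t₀ t₁, ‖rlKernel b (t - s)‖ₑ ≤
      ENNReal.ofReal ((t₁ - t₀) ^ (b + 1) / (b + 1)) := by
  set I := Ioc 0 (t₁ - t₀)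
  calc ∫⁻ t in Ioc t₀ t₁, ‖rlKernel b (t - s)‖ₑ
      = ∫⁻ t in Ioc t₀ t₁, I.indicator (fun x => ‖rlKernel b x‖ₑ) (t - s) := by
        refine setLIntegral_congr_fun measurableSet_Ioc fun t ht => ?_
        by_cases hts : 0 < t - s
        · rw [indicator_of_mem (show t - s ∈ I from ⟨hts, by linarith [ht.2]⟩)]
        · rw [indicator_of_notMem (show t - s ∉ I from fun h => hts h.1),
            rlKernel, indicator_of_notMem (show t - s ∉ Ioi 0 from hts), enorm_zero]
    _ ≤ ∫⁻ t, I.indicator (fun x => ‖rlKernel b x‖ₑ) (t - s) := setLIntegral_le_lintegral _ _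
    _ = ∫⁻ x in I, ‖rlKernel b x‖ₑ := by
        rw [lintegral_sub_right_eq_self (I.indicator fun x => ‖rlKernel b x‖ₑ) s,
          lintegral_indicator measurableSet_Ioc]
    _ = _ := setLIntegral_enorm_rlKernel_Ioc hb (sub_nonneg.2 ht)

theorem RL_eq_setIntegral_rlKernel (α : ℝ) {t₀ t₁ t : ℝ} (f : ℝ → ℝ) (h₀ : t₀ ≤ t)
    (h₁ : t ≤ t₁) :
    RL α t₀ f t = 1 / Real.Gamma α * ∫ s in Ioc t₀ t₁, rlKernel (α - 1) (t - s) * f s := by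
  have hvanish : ∀ s ∈ Ioc t₀ t₁ \ Ioo t₀ t, rlKernel (α - 1) (t - s) * f s = 0 := by
    intro s hs
    have hts : ¬ 0 < t - s := fun h => hs.2 ⟨hs.1.1, by linarith⟩
    rw [rlKernel, indicator_of_notMem (show t - s ∉ Ioi 0 from hts), zero_mul]
  rw [RL, intervalIntegral.integral_of_le h₀, integral_Ioc_eq_integral_Ioo,
    setIntegral_eq_of_subset_of_forall_sdiff_eq_zero measurableSet_Ioc
      (Ioo_subset_Ioc_self.trans (Ioc_subset_Ioc_right h₁)) hvanish]
  congr 1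
  refine setIntegral_congr_fun measurableSet_Ioo fun s hs => ?_
  rw [rlKernel, indicator_of_mem (mem_Ioi.2 (sub_pos.2 hs.2))]

theorem enorm_RL_le (α : ℝ) {t₀ t₁ t : ℝ} (f : ℝ → ℝ) (h₀ : t₀ ≤ t) (h₁ : t ≤ t₁) :
    ‖RL α t₀ f t‖ₑ ≤
      ‖1 / Real.Gamma α‖ₑ * ∫⁻ s in Ioc t₀ t₁, ‖rlKernel (α - 1) (t - s)‖ₑ * ‖f s‖ₑ := by
  rw [RL_eq_setIntegral_rlKernel α f h₀ h₁, enorm_mul]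
  gcongr
  simpa only [enorm_mul] using
    enorm_integral_le_lintegral_enorm fun s => rlKernel (α - 1) (t - s) * f s

theorem aestronglyMeasurable_RL (α t₀ t₁ : ℝ) {f : ℝ → ℝ}
    (hf : AEStronglyMeasurable f (volume.restrict (Ioc t₀ t₁))) :
    AEStronglyMeasurable (RL α t₀ f) (volume.restrict (Ioc t₀ t₁)) := by
  have hk : AEStronglyMeasurable (fun p : ℝ × ℝ => rlKernel (α - 1) (p.1 - p.2) * f p.2)
      ((volume.restrict (Ioc t₀ t₁)).prod (volume.restrict (Ioc t₀ t₁))) :=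
    ((measurable_rlKernel _).comp (measurable_fst.sub measurable_snd)).aestronglyMeasurable.mul
      hf.comp_snd
  refine (hk.integral_prod_right'.const_mul (1 / Real.Gamma α)).congr ?_
  filter_upwards [ae_restrict_mem measurableSet_Ioc] with t ht
  exact (RL_eq_setIntegral_rlKernel α f ht.1.le ht.2).symm

theorem eLpNorm_RL_le {α q t₀ t₁ : ℝ} (hq : 1 ≤ q) (hαq : q * (1 - α) < 1) (ht : t₀ ≤ t₁)
    {f : ℝ → ℝ} (hf : AEStronglyMeasurable f (volume.restrict (Ioc t₀ t₁))) :
    eLpNorm (RL α t₀ f) (ENNReal.ofReal q) (volume.restrict (Ioc t₀ t₁)) ≤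
      ‖1 / Real.Gamma α‖ₑ *
        ENNReal.ofReal ((t₁ - t₀) ^ (1 - q * (1 - α)) / (1 - q * (1 - α))) ^ (1 / q) *
        ∫⁻ s in Ioc t₀ t₁, ‖f s‖ₑ := by
  set μ := volume.restrict (Ioc t₀ t₁)
  have hq0 : 0 < q := by linarith
  have hkernel : ∀ᵐ s ∂μ, ∫⁻ t, ‖rlKernel (α - 1) (t - s)‖ₑ ^ q ∂μ ≤
      ENNReal.ofReal ((t₁ - t₀) ^ (1 - q * (1 - α)) / (1 - q * (1 - α))) := by
    filter_upwards [ae_restrict_mem measurableSet_Ioc] with s hs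
    simp_rw [enorm_rlKernel_rpow hq0, show 1 - q * (1 - α) = (α - 1) * q + 1 by ring]
    exact setLIntegral_enorm_rlKernel_sub_le (by linarith) ht hs.1.le
  set C := ENNReal.ofReal ((t₁ - t₀) ^ (1 - q * (1 - α)) / (1 - q * (1 - α)))
  set c := ‖1 / Real.Gamma α‖ₑ
  have hK : Measurable (Function.uncurry fun t s => ‖rlKernel (α - 1) (t - s)‖ₑ) :=
    ((measurable_rlKernel _).comp (measurable_fst.sub measurable_snd)).enorm
  have hmain : ∫⁻ t, ‖RL α t₀ f t‖ₑ ^ q ∂μ ≤ c ^ q * (C * (∫⁻ s, ‖f s‖ₑ ∂μ) ^ q) :=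
    calc ∫⁻ t, ‖RL α t₀ f t‖ₑ ^ q ∂μ
        ≤ ∫⁻ t, (c * ∫⁻ s, ‖rlKernel (α - 1) (t - s)‖ₑ * ‖f s‖ₑ ∂μ) ^ q ∂μ := by
          refine lintegral_mono_ae ?_
          filter_upwards [ae_restrict_mem measurableSet_Ioc] with t ht
          gcongr
          exact enorm_RL_le α f ht.1.le ht.2
      _ = c ^ q * ∫⁻ t, (∫⁻ s, ‖rlKernel (α - 1) (t - s)‖ₑ * ‖f s‖ₑ ∂μ) ^ q ∂μ := by
          simp_rw [ENNReal.mul_rpow_of_nonneg _ _ hq0.le]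
          exact lintegral_const_mul' _ _ (by finiteness)
      _ ≤ c ^ q * (C * (∫⁻ s, ‖f s‖ₑ ∂μ) ^ q) := by
          gcongr
          exact lintegral_rpow_lintegral_mul_le hq hK hf.enorm hkernel
  rw [eLpNorm_eq_lintegral_rpow_enorm_toReal (by simpa) ENNReal.ofReal_ne_top,
    ENNReal.toReal_ofReal hq0.le]
  calc (∫⁻ t, ‖RL α t₀ f t‖ₑ ^ q ∂μ) ^ (1 / q)
      ≤ (c ^ q * (C * (∫⁻ s, ‖f s‖ₑ ∂μ) ^ q)) ^ (1 / q) := by gcongr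
    _ = c * C ^ (1 / q) * ∫⁻ s, ‖f s‖ₑ ∂μ := by
      rw [ENNReal.mul_rpow_of_nonneg _ _ (by positivity),
        ENNReal.mul_rpow_of_nonneg _ _ (by positivity), ← ENNReal.rpow_mul, ← ENNReal.rpow_mul,
        mul_one_div_cancel hq0.ne', ENNReal.rpow_one, ENNReal.rpow_one, mul_assoc]

theorem memLp_RL {α q t₀ t₁ : ℝ} (hq : 1 ≤ q) (hαq : q * (1 - α) < 1) (ht : t₀ ≤ t₁)
    {f : ℝ → ℝ} (hf : IntegrableOn f (Ioc t₀ t₁)) :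
    MemLp (RL α t₀ f) (ENNReal.ofReal q) (volume.restrict (Ioc t₀ t₁)) :=
  ⟨aestronglyMeasurable_RL α t₀ t₁ hf.1,
    (eLpNorm_RL_le hq hαq ht hf.1).trans_lt (by have := hf.2; finiteness)⟩

theorem one_div_Gamma_le_two_div_rpow_mul_Gamma {α : ℝ} (hα : 0 < α) (hα1 : α ≤ 1) :
    1 / Real.Gamma α ≤ 2 / (α ^ (1 - α) * Real.Gamma α) := by
  have hΓ := Real.Gamma_pos_of_pos hα
  have hpow_pos : 0 < α ^ (1 - α) := Real.rpow_pos_of_pos hα _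
  have hpow_le : α ^ (1 - α) ≤ 1 := Real.rpow_le_one hα.le hα1 (by linarith)
  rw [div_le_div_iff₀ hΓ (by positivity)]
  nlinarith

theorem stmt12 (α q t₀ t₁ : ℝ) (hα : 0 < α) (hα1 : α < 1) (ht : t₀ < t₁)
    (hq : 1 ≤ q) (hq2 : q < 1 / (1 - α))
    (f : ℝ → ℝ) (hf : IntegrableOn f (Set.Ioc t₀ t₁)) :
    IntegrableOn (fun t => |RL α t₀ f t| ^ q) (Set.Ioc t₀ t₁) ∧
    (∫ t in Set.Ioc t₀ t₁, |RL α t₀ f t| ^ q) ^ (1 / q) ≤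
      (2 / (α ^ (1 - α) * Real.Gamma α)) *
        ((t₁ - t₀) ^ (1 - q * (1 - α)) / (1 - q * (1 - α))) ^ (1 / q) *
        ∫ t in Set.Ioc t₀ t₁, |f t| := by
  have hq0 : 0 < q := by linarith
  have hp0 : ENNReal.ofReal q ≠ 0 := by simpa using hq0
  have hαq : q * (1 - α) < 1 := by rwa [lt_div_iff₀ (by linarith)] at hq2
  have hmem := memLp_RL hq hαq ht.le hf
  have hbound := eLpNorm_RL_le hq hαq ht.le hf.1
  refine ⟨?_, ?_⟩
  · have h := hmem.integrable_norm_rpow hp0 ENNReal.ofReal_ne_top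
    simp only [Real.norm_eq_abs, ENNReal.toReal_ofReal hq0.le] at h
    exact h
  · have hΓ : 0 ≤ 1 / Real.Gamma α := by have := Real.Gamma_pos_of_pos hα; positivity
    have hC : 0 ≤ (t₁ - t₀) ^ (1 - q * (1 - α)) / (1 - q * (1 - α)) := by
      have hT := sub_pos.2 ht
      have hγ : 0 < 1 - q * (1 - α) := by linarith
      positivity
    rw [hmem.eLpNorm_eq_integral_rpow_norm hp0 ENNReal.ofReal_ne_top,
      ← ofReal_integral_norm_eq_lintegral_enorm hf, Real.enorm_of_nonneg hΓ,
      ENNReal.ofReal_rpow_of_nonneg hC (by positivity), ← ENNReal.ofReal_mul hΓ,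
      ← ENNReal.ofReal_mul (by positivity), ENNReal.ofReal_le_ofReal_iff (by positivity)] at hbound
    simp only [ENNReal.toReal_ofReal hq0.le, Real.norm_eq_abs, ← one_div] at hbound
    calc _ ≤ _ := hbound
      _ ≤ _ := by gcongr ?_ * _ * _; exact one_div_Gamma_le_two_div_rpow_mul_Gamma hα hα1.le
end

section
/- Let 0 < β < α < 1 and l, x > 0. Then there exists ξ ∈ (0,l) such that |(l+x)^{α-1} - x^{α-1}| = l^β (ξ+x)^{α-β-1} · ((1-α)/(Γ(1+β)Γ(1-β))) · ∫_{x/(ξ+x)}^1 (1-w)^{-β} w^{α-2} dw. -/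
/-!
Put `φ(t) = (t + x)^(α-1)` and `D(t) = ∫₀ᵗ (t - s)^(-β) (s + x)^(α-2) ds`, which is
`Γ(1-β) / (α - 1)` times the Caputo derivative of order `β` of `φ`. Riemann–Liouville integrals
compose, `I^β I^(1-β) = I^1`, so Tonelli and the Beta integral give
`∫₀ˡ (l - t)^(β-1) D(t) dt = Γ(β) Γ(1-β) ∫₀ˡ (s + x)^(α-2) ds`
`= Γ(β) Γ(1-β) (φ(0) - φ(l)) / (1 - α)`.
The weight `(l - t)^(β-1)` is positive and `D` is continuous, so the mean value theorem for
integrals gives `ξ ∈ (0, l)` with left-hand side `D(ξ) l^β / β`, and the substitution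
`w = (s + x) / (ξ + x)` turns `D(ξ)` into the Beta-type integral of the statement.
-/

open MeasureTheory Set

theorem integral_rpow_mul_one_sub_rpow {a b : ℝ} (ha : 0 < a) (hb : 0 < b) :
    ∫ v in (0 : ℝ)..1, v ^ (a - 1) * (1 - v) ^ (b - 1) =
      Real.Gamma a * Real.Gamma b / Real.Gamma (a + b) := by
  have h : ((∫ v in (0 : ℝ)..1, v ^ (a - 1) * (1 - v) ^ (b - 1) : ℝ) : ℂ) =
      Complex.betaIntegral a b := by
    rw [Complex.betaIntegral, ← intervalIntegral.integral_ofReal]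
    refine intervalIntegral.integral_congr fun v hv => ?_
    rw [uIcc_of_le zero_le_one] at hv
    simp only [Complex.ofReal_mul, Complex.ofReal_cpow hv.1,
      Complex.ofReal_cpow (sub_nonneg.2 hv.2)]
    push_cast
    rfl
  rw [Complex.betaIntegral_eq_Gamma_mul_div _ _ (by simpa) (by simpa), ← Complex.ofReal_add,
    Complex.Gamma_ofReal, Complex.Gamma_ofReal, Complex.Gamma_ofReal] at h
  exact_mod_cast h

theorem intervalIntegrable_sub_rpow {r : ℝ} (hr : -1 < r) (c a b : ℝ) :
    IntervalIntegrable (fun t => (c - t) ^ r) volume a b := by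
  simpa using
    (intervalIntegral.intervalIntegrable_rpow' hr (a := c - a) (b := c - b)).comp_sub_left c

theorem intervalIntegrable_rpow_sub {r : ℝ} (hr : -1 < r) (c a b : ℝ) :
    IntervalIntegrable (fun t => (t - c) ^ r) volume a b := by
  simpa using
    (intervalIntegral.intervalIntegrable_rpow' hr (a := a - c) (b := b - c)).comp_sub_right c

theorem intervalIntegrable_sub_rpow_mul_sub_rpow {a b s l : ℝ} (ha : 0 < a) (hb : 0 < b)
    (hsl : s < l) :
    IntervalIntegrable (fun t => (t - s) ^ (a - 1) * (l - t) ^ (b - 1)) volume s l := by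
  obtain ⟨m, hsm, hml⟩ := exists_between hsl
  refine IntervalIntegrable.trans (b := m) ?_ ?_
  · refine (intervalIntegrable_rpow_sub (by linarith) s s m).mul_continuousOn ?_
    refine (continuousOn_const.sub continuousOn_id).rpow_const fun t ht => Or.inl ?_
    rw [uIcc_of_le hsm.le] at ht
    exact (sub_pos.2 (ht.2.trans_lt hml)).ne'
  · refine (intervalIntegrable_sub_rpow (by linarith) l m l).continuousOn_mul ?_
    refine (continuousOn_id.sub continuousOn_const).rpow_const fun t ht => Or.inl ?_
    rw [uIcc_of_le hml.le] at ht
    exact (sub_pos.2 (hsm.trans_le ht.1)).ne'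

theorem integral_sub_rpow_mul_sub_rpow {a b s l : ℝ} (ha : 0 < a) (hb : 0 < b) (hsl : s < l) :
    ∫ t in s..l, (t - s) ^ (a - 1) * (l - t) ^ (b - 1) =
      (l - s) ^ (a + b - 1) * (Real.Gamma a * Real.Gamma b / Real.Gamma (a + b)) := by
  have hc : 0 < l - s := sub_pos.2 hsl
  have h := intervalIntegral.smul_integral_comp_mul_add
    (fun t => (t - s) ^ (a - 1) * (l - t) ^ (b - 1)) (a := 0) (b := 1) (l - s) s
  simp only [mul_zero, zero_add, mul_one, sub_add_cancel, smul_eq_mul] at h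
  rw [← h, ← integral_rpow_mul_one_sub_rpow ha hb, ← intervalIntegral.integral_const_mul,
    ← intervalIntegral.integral_const_mul]
  refine intervalIntegral.integral_congr fun v hv => ?_
  rw [uIcc_of_le zero_le_one] at hv
  have h1 : (l - s) * v + s - s = (l - s) * v := by ring
  have h2 : l - ((l - s) * v + s) = (l - s) * (1 - v) := by ring
  have h3 : (l - s) ^ (a + b - 1) = (l - s) * (l - s) ^ (a - 1) * (l - s) ^ (b - 1) := by
    rw [show a + b - 1 = a - 1 + (b - 1) + 1 by ring, Real.rpow_add_one hc.ne',
      Real.rpow_add hc]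
    ring
  simp only [h1, h2, Real.mul_rpow hc.le hv.1, Real.mul_rpow hc.le (sub_nonneg.2 hv.2), h3]
  ring

theorem setLIntegral_ofReal_eq_ofReal_setIntegral {X : Type*} [MeasurableSpace X]
    {μ : Measure X} {S T : Set X} (hS : MeasurableSet S) (hT : MeasurableSet T) {g h : X → ℝ}
    (hgh : EqOn g h (S ∩ T)) (hg : EqOn g 0 (S \ T)) (hh : IntegrableOn h (S ∩ T) μ)
    (hh0 : ∀ x ∈ S ∩ T, 0 ≤ h x) :
    ∫⁻ x in S, ENNReal.ofReal (g x) ∂μ = ENNReal.ofReal (∫ x in S ∩ T, h x ∂μ) := by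
  rw [← lintegral_inter_add_sdiff _ S hT,
    setLIntegral_eq_zero (hS.diff hT) fun x hx => by simp [hg hx], add_zero,
    setLIntegral_congr_fun (hS.inter hT) fun x hx => by rw [hgh hx],
    ofReal_integral_eq_lintegral_ofReal hh (ae_restrict_of_forall_mem (hS.inter hT) hh0)]

theorem integral_eq_integral_of_lintegral_swap {X Y : Type*} [MeasurableSpace X]
    [MeasurableSpace Y] {μ : Measure X} {ν : Measure Y} [SFinite μ] [SFinite ν] {F : X → Y → ℝ}
    (hF : AEMeasurable (Function.uncurry F) (μ.prod ν)) {G : X → ℝ} {H : Y → ℝ}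
    (hG : ∀ᵐ x ∂μ, ∫⁻ y, ENNReal.ofReal (F x y) ∂ν = ENNReal.ofReal (G x))
    (hH : ∀ᵐ y ∂ν, ∫⁻ x, ENNReal.ofReal (F x y) ∂μ = ENNReal.ofReal (H y))
    (hGi : Integrable G μ) (hHi : Integrable H ν) (hG0 : 0 ≤ᵐ[μ] G) (hH0 : 0 ≤ᵐ[ν] H) :
    ∫ x, G x ∂μ = ∫ y, H y ∂ν := by
  rw [← ENNReal.ofReal_eq_ofReal_iff (integral_nonneg_of_ae hG0) (integral_nonneg_of_ae hH0),
    ofReal_integral_eq_lintegral_ofReal hGi hG0, ofReal_integral_eq_lintegral_ofReal hHi hH0,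
    ← lintegral_congr_ae hG, ← lintegral_congr_ae hH]
  exact lintegral_lintegral_swap hF.ennreal_ofReal

/-- The Riemann–Liouville integral `∫₀ᵗ (t - s)^(a-1) f(s) ds` of order `a`, without the usual
normalising factor `1 / Γ(a)`. For `0 < β < 1`, `rlIntegral (1 - β) φ' t` is `Γ(1 - β)` times the
Caputo derivative of order `β` of `φ` at `t`. -/
noncomputable def rlIntegral (a : ℝ) (f : ℝ → ℝ) (t : ℝ) : ℝ :=
  ∫ s in (0 : ℝ)..t, (t - s) ^ (a - 1) * f s

theorem rlIntegral_one (f : ℝ → ℝ) (t : ℝ) : rlIntegral 1 f t = ∫ s in (0 : ℝ)..t, f s := by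
  simp [rlIntegral]

theorem rlIntegral_nonneg (a : ℝ) {f : ℝ → ℝ} {t : ℝ} (ht : 0 ≤ t)
    (hf : ∀ s ∈ Icc 0 t, 0 ≤ f s) : 0 ≤ rlIntegral a f t :=
  intervalIntegral.integral_nonneg ht fun s hs =>
    mul_nonneg (Real.rpow_nonneg (sub_nonneg.2 hs.2) _) (hf s hs)

theorem intervalIntegrable_sub_rpow_mul {a t : ℝ} (ha : 0 < a) {g : ℝ → ℝ}
    (hg : ContinuousOn g (Icc 0 t)) (ht : 0 ≤ t) :
    IntervalIntegrable (fun s => (t - s) ^ (a - 1) * g s) volume 0 t :=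
  (intervalIntegrable_sub_rpow (by linarith) t 0 t).mul_continuousOn (by rwa [uIcc_of_le ht])

theorem rlIntegral_eq_rpow_mul_integral {a : ℝ} (ha : a ≠ 0) (f : ℝ → ℝ) {t : ℝ} (ht : 0 ≤ t) :
    rlIntegral a f t = t ^ a * ∫ u in (0 : ℝ)..1, (1 - u) ^ (a - 1) * f (t * u) := by
  rcases ht.eq_or_lt with rfl | ht
  · simp [rlIntegral, Real.zero_rpow ha]
  have h := intervalIntegral.smul_integral_comp_mul_left
    (fun s => (t - s) ^ (a - 1) * f s) (a := 0) (b := 1) t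
  simp only [mul_zero, mul_one, smul_eq_mul] at h
  rw [rlIntegral, ← h, ← intervalIntegral.integral_const_mul,
    ← intervalIntegral.integral_const_mul]
  refine intervalIntegral.integral_congr fun u hu => ?_
  rw [uIcc_of_le zero_le_one] at hu
  have hta : t ^ a = t * t ^ (a - 1) := by
    rw [← Real.rpow_one_add' ht.le (by simpa using ha), add_sub_cancel]
  rw [show t - t * u = t * (1 - u) by ring, Real.mul_rpow ht.le (sub_nonneg.2 hu.2), hta]
  ring

theorem continuousOn_rlIntegral {a l : ℝ} (ha : 0 < a) {f : ℝ → ℝ}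
    (hf : ContinuousOn f (Icc 0 l)) : ContinuousOn (rlIntegral a f) (Icc 0 l) := by
  obtain ⟨C, hC⟩ := isCompact_Icc.exists_bound_of_continuousOn hf
  have hmaps : ∀ u ∈ Icc (0 : ℝ) 1, MapsTo (· * u) (Icc 0 l) (Icc 0 l) := fun u hu t ht =>
    ⟨mul_nonneg ht.1 hu.1, (mul_le_of_le_one_right ht.1 hu.2).trans ht.2⟩
  have hE : ContinuousOn (fun t => ∫ u in (0 : ℝ)..1, (1 - u) ^ (a - 1) * f (t * u))
      (Icc 0 l) := by
    intro t₀ ht₀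
    refine intervalIntegral.continuousWithinAt_of_dominated_interval
      (bound := fun u => (1 - u) ^ (a - 1) * C) ?_ ?_
      ((intervalIntegrable_sub_rpow (by linarith) 1 0 1).mul_const C) ?_
    · filter_upwards [self_mem_nhdsWithin] with t ht
      refine (Measurable.aestronglyMeasurable (by fun_prop)).mul ?_
      rw [uIoc_of_le zero_le_one]
      exact (hf.comp (continuousOn_const.mul continuousOn_id) fun u hu =>
        hmaps u (Ioc_subset_Icc_self hu) ht).aestronglyMeasurable measurableSet_Ioc
    · filter_upwards [self_mem_nhdsWithin] with t ht
      filter_upwards with u hu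
      rw [uIoc_of_le zero_le_one] at hu
      rw [norm_mul, Real.norm_of_nonneg (Real.rpow_nonneg (sub_nonneg.2 hu.2) _)]
      exact mul_le_mul_of_nonneg_left (hC _ (hmaps u (Ioc_subset_Icc_self hu) ht))
        (Real.rpow_nonneg (sub_nonneg.2 hu.2) _)
    · filter_upwards with u hu
      rw [uIoc_of_le zero_le_one] at hu
      exact continuousWithinAt_const.mul ((hf.comp (continuousOn_id.mul continuousOn_const)
        (hmaps u (Ioc_subset_Icc_self hu))) t₀ ht₀)
  exact ((continuousOn_id.rpow_const fun t _ => Or.inr ha.le).mul hE).congr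
    fun t ht => rlIntegral_eq_rpow_mul_integral ha.ne' f ht.1

section Composition

variable {a b l : ℝ} {f : ℝ → ℝ}

/-- `rlIntegral a (rlIntegral b f) l` is the integral of this function over `(0, l)²`. -/
noncomputable def rlDoubleIntegrand (a b l : ℝ) (f : ℝ → ℝ) (t s : ℝ) : ℝ :=
  (l - t) ^ (a - 1) * ((if s < t then (t - s) ^ (b - 1) else 0) * f s)

theorem measurable_uncurry_rlDoubleIntegrand (hf : Measurable f) :
    Measurable (Function.uncurry (rlDoubleIntegrand a b l f)) :=
  Measurable.mul (by fun_prop) <| Measurable.mul (Measurable.ite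
    (measurableSet_lt measurable_snd measurable_fst) (by fun_prop) measurable_const)
    (hf.comp measurable_snd)

theorem lintegral_rlDoubleIntegrand_right (hb : 0 < b) (hf : ContinuousOn f (Icc 0 l))
    (hf0 : ∀ s ∈ Icc 0 l, 0 ≤ f s) {t : ℝ} (ht : t ∈ Ioo 0 l) :
    ∫⁻ s in Ioo 0 l, ENNReal.ofReal (rlDoubleIntegrand a b l f t s) =
      ENNReal.ofReal ((l - t) ^ (a - 1) * rlIntegral b f t) := by
  have hIoo : Ioo 0 l ∩ Iio t = Ioo 0 t := by rw [Ioo_inter_Iio, min_eq_right ht.2.le]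
  rw [setLIntegral_ofReal_eq_ofReal_setIntegral measurableSet_Ioo (T := Iio t) measurableSet_Iio
    (h := fun s => (l - t) ^ (a - 1) * ((t - s) ^ (b - 1) * f s))
    (fun s hs => by simp only [rlDoubleIntegrand, if_pos (show s < t from hs.2)])
    (fun s hs => by simp [rlDoubleIntegrand, if_neg (show ¬s < t from hs.2)]),
    hIoo, MeasureTheory.integral_const_mul, rlIntegral, intervalIntegral.integral_of_le ht.1.le,
    integral_Ioc_eq_integral_Ioo]
  · rw [hIoo]
    exact ((intervalIntegrable_iff_integrableOn_Ioo_of_le ht.1.le).1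
      (intervalIntegrable_sub_rpow_mul hb (hf.mono (Icc_subset_Icc_right ht.2.le))
        ht.1.le)).const_mul _
  · exact fun s hs => mul_nonneg (Real.rpow_nonneg (by linarith [ht.2]) _)
      (mul_nonneg (Real.rpow_nonneg (by linarith [hs.2.out]) _)
        (hf0 s (Ioo_subset_Icc_self hs.1)))

theorem lintegral_rlDoubleIntegrand_left (ha : 0 < a) (hb : 0 < b) {s : ℝ} (hs : s ∈ Ioo 0 l)
    (hfs : 0 ≤ f s) :
    ∫⁻ t in Ioo 0 l, ENNReal.ofReal (rlDoubleIntegrand a b l f t s) =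
      ENNReal.ofReal (Real.Gamma a * Real.Gamma b / Real.Gamma (a + b) *
        ((l - s) ^ (a + b - 1) * f s)) := by
  have hIoo : Ioo 0 l ∩ Ioi s = Ioo s l := by rw [Ioo_inter_Ioi, max_eq_right hs.1.le]
  rw [setLIntegral_ofReal_eq_ofReal_setIntegral measurableSet_Ioo (T := Ioi s) measurableSet_Ioi
    (h := fun t => (t - s) ^ (b - 1) * (l - t) ^ (a - 1) * f s)
    (fun t ht => by simp only [rlDoubleIntegrand, if_pos (show s < t from ht.2)]; ring)
    (fun t ht => by simp [rlDoubleIntegrand, if_neg (show ¬s < t from ht.2)]),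
    hIoo, MeasureTheory.integral_mul_const, ← integral_Ioc_eq_integral_Ioo,
    ← intervalIntegral.integral_of_le hs.2.le, integral_sub_rpow_mul_sub_rpow hb ha hs.2,
    add_comm b a, mul_comm (Real.Gamma b)]
  · congr 1
    ring
  · rw [hIoo]
    exact ((intervalIntegrable_iff_integrableOn_Ioo_of_le hs.2.le).1
      (intervalIntegrable_sub_rpow_mul_sub_rpow hb ha hs.2)).mul_const _
  · exact fun t ht => mul_nonneg (mul_nonneg (Real.rpow_nonneg (by linarith [ht.2.out]) _)
      (Real.rpow_nonneg (by linarith [ht.1.2]) _)) hfs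

theorem rlIntegral_rlIntegral (ha : 0 < a) (hb : 0 < b) (hl : 0 ≤ l) (hf_meas : Measurable f)
    (hf : ContinuousOn f (Icc 0 l)) (hf0 : ∀ s ∈ Icc 0 l, 0 ≤ f s) :
    rlIntegral a (rlIntegral b f) l =
      Real.Gamma a * Real.Gamma b / Real.Gamma (a + b) * rlIntegral (a + b) f l := by
  have hB : 0 ≤ Real.Gamma a * Real.Gamma b / Real.Gamma (a + b) := by
    have := Real.Gamma_pos_of_pos ha
    have := Real.Gamma_pos_of_pos hb
    have := Real.Gamma_pos_of_pos (add_pos ha hb)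
    positivity
  have hGi := (intervalIntegrable_iff_integrableOn_Ioo_of_le hl).1
    (intervalIntegrable_sub_rpow_mul ha (continuousOn_rlIntegral hb hf) hl)
  have hHi := ((intervalIntegrable_iff_integrableOn_Ioo_of_le hl).1
    (intervalIntegrable_sub_rpow_mul (add_pos ha hb) hf hl)).const_mul
      (Real.Gamma a * Real.Gamma b / Real.Gamma (a + b))
  rw [rlIntegral, rlIntegral, intervalIntegral.integral_of_le hl,
    intervalIntegral.integral_of_le hl, integral_Ioc_eq_integral_Ioo,
    integral_Ioc_eq_integral_Ioo, ← MeasureTheory.integral_const_mul]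
  refine integral_eq_integral_of_lintegral_swap
    (measurable_uncurry_rlDoubleIntegrand hf_meas).aemeasurable
    (ae_restrict_of_forall_mem measurableSet_Ioo fun t ht =>
      lintegral_rlDoubleIntegrand_right hb hf hf0 ht)
    (ae_restrict_of_forall_mem measurableSet_Ioo fun s hs =>
      lintegral_rlDoubleIntegrand_left ha hb hs (hf0 s (Ioo_subset_Icc_self hs)))
    hGi hHi (ae_restrict_of_forall_mem measurableSet_Ioo fun t ht => ?_)
    (ae_restrict_of_forall_mem measurableSet_Ioo fun s hs => ?_)
  · exact mul_nonneg (Real.rpow_nonneg (by linarith [ht.2]) _)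
      (rlIntegral_nonneg b ht.1.le fun s hs => hf0 s ⟨hs.1, hs.2.trans ht.2.le⟩)
  · exact mul_nonneg hB (mul_nonneg (Real.rpow_nonneg (by linarith [hs.2]) _)
      (hf0 s (Ioo_subset_Icc_self hs)))

end Composition

theorem exists_mem_Ioo_integral_mul_eq_integral_mul {f g : ℝ → ℝ} {a b : ℝ} (hab : a < b)
    (hf : ContinuousOn f (Ioo a b)) (hg : ∀ x ∈ Ioo a b, 0 < g x)
    (hgi : IntervalIntegrable g volume a b)
    (hfgi : IntervalIntegrable (fun x => g x * f x) volume a b) :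
    ∃ c ∈ Ioo a b, ∫ x in a..b, g x * f x = (∫ x in a..b, g x) * f c := by
  have hg_pos : 0 < ∫ x in a..b, g x := intervalIntegral.intervalIntegral_pos_of_pos_on hgi hg hab
  set m := (∫ x in a..b, g x * f x) / ∫ x in a..b, g x
  suffices ∃ c ∈ Ioo a b, f c = m by
    obtain ⟨c, hc, hfc⟩ := this
    exact ⟨c, hc, by rw [hfc, mul_div_cancel₀ _ hg_pos.ne']⟩
  by_contra! hne
  have hsign : (∀ x ∈ Ioo a b, m < f x) ∨ ∀ x ∈ Ioo a b, f x < m := by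
    by_contra! h
    obtain ⟨⟨p, hp, hpm⟩, q, hq, hqm⟩ := h
    obtain ⟨c, hc, hfc⟩ := isPreconnected_Ioo.intermediate_value hp hq hf ⟨hpm, hqm⟩
    exact hne c hc hfc
  have hdiff : ∫ x in a..b, g x * (f x - m) = 0 := by
    simp only [mul_sub]
    rw [intervalIntegral.integral_sub hfgi (hgi.mul_const m), intervalIntegral.integral_mul_const,
      mul_div_cancel₀ _ hg_pos.ne', sub_self]
  have hdi : IntervalIntegrable (fun x => g x * (f x - m)) volume a b := by
    simpa only [mul_sub] using hfgi.sub (hgi.mul_const m)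
  rcases hsign with h | h
  · have := intervalIntegral.intervalIntegral_pos_of_pos_on hdi
      (fun x hx => mul_pos (hg x hx) (sub_pos.2 (h x hx))) hab
    linarith
  · have := intervalIntegral.intervalIntegral_pos_of_pos_on hdi.neg
      (fun x hx => by simpa [mul_sub] using mul_pos (hg x hx) (sub_pos.2 (h x hx))) hab
    simp only [Pi.neg_apply, intervalIntegral.integral_neg] at this
    linarith

theorem integral_sub_rpow {a l : ℝ} (ha : 0 < a) :
    ∫ t in (0 : ℝ)..l, (l - t) ^ (a - 1) = l ^ a / a := by
  rw [intervalIntegral.integral_comp_sub_left (fun t => t ^ (a - 1)), sub_self, sub_zero,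
    integral_rpow (Or.inl (by linarith)), sub_add_cancel, Real.zero_rpow ha.ne', sub_zero]

theorem exists_mem_Ioo_rlIntegral_eq_mul {a l : ℝ} (ha : 0 < a) (hl : 0 < l) {h : ℝ → ℝ}
    (hh : ContinuousOn h (Icc 0 l)) : ∃ ξ ∈ Ioo 0 l, rlIntegral a h l = l ^ a / a * h ξ := by
  rw [← integral_sub_rpow ha]
  exact exists_mem_Ioo_integral_mul_eq_integral_mul hl (hh.mono Ioo_subset_Icc_self)
    (fun t ht => Real.rpow_pos_of_pos (sub_pos.2 ht.2) _)
    (intervalIntegrable_sub_rpow (by linarith) l 0 l) (intervalIntegrable_sub_rpow_mul ha hh hl.le)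

theorem rlIntegral_add_rpow {a q x ξ : ℝ} (hξ : 0 ≤ ξ) (hx : 0 < x) :
    rlIntegral a (fun s => (s + x) ^ q) ξ =
      (ξ + x) ^ (a + q) * ∫ w in x / (ξ + x)..1, (1 - w) ^ (a - 1) * w ^ q := by
  have hc : 0 < ξ + x := by linarith
  have h := intervalIntegral.integral_comp_div_add (fun w => (1 - w) ^ (a - 1) * w ^ q)
    (a := 0) (b := ξ) hc.ne' (x / (ξ + x))
  rw [zero_div, zero_add, ← add_div, div_self hc.ne', smul_eq_mul] at h
  rw [show a + q = a - 1 + q + 1 by ring, Real.rpow_add_one hc.ne', mul_assoc, ← h, rlIntegral,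
    ← intervalIntegral.integral_const_mul]
  refine intervalIntegral.integral_congr fun s hs => ?_
  rw [uIcc_of_le hξ] at hs
  have h1 : 1 - (s / (ξ + x) + x / (ξ + x)) = (ξ - s) / (ξ + x) := by field_simp; ring
  have h2 : s / (ξ + x) + x / (ξ + x) = (s + x) / (ξ + x) := by ring
  rw [h1, h2, Real.div_rpow (sub_nonneg.2 hs.2) hc.le, Real.div_rpow (by linarith [hs.1]) hc.le,
    Real.rpow_add hc]
  field_simp

theorem integral_add_rpow {r x l : ℝ} (hr : r ≠ -1) (hx : 0 < x) (hl : 0 ≤ l) :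
    ∫ s in (0 : ℝ)..l, (s + x) ^ r = ((l + x) ^ (r + 1) - x ^ (r + 1)) / (r + 1) := by
  have h0 : (0 : ℝ) ∉ uIcc x (l + x) := by
    rw [uIcc_of_le (by linarith)]
    exact fun h => hx.not_ge h.1
  rw [intervalIntegral.integral_comp_add_right (fun s => s ^ r), zero_add,
    integral_rpow (Or.inr ⟨hr, h0⟩)]

theorem stmt14 (α β l x : ℝ) (hβ : 0 < β) (hβα : β < α) (hα : α < 1)
    (hl : 0 < l) (hx : 0 < x) :
    ∃ ξ ∈ Set.Ioo 0 l,
      |(l + x) ^ (α - 1) - x ^ (α - 1)| =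
        l ^ β * (ξ + x) ^ (α - β - 1) *
          ((1 - α) / (Real.Gamma (1 + β) * Real.Gamma (1 - β))) *
          ∫ w in (x / (ξ + x))..1, (1 - w) ^ (-β) * w ^ (α - 2) := by
  have hβ' : 0 < 1 - β := by linarith
  have hψ : ContinuousOn (fun s => (s + x) ^ (α - 2)) (Icc 0 l) :=
    (continuousOn_id.add continuousOn_const).rpow_const fun s hs =>
      Or.inl (add_pos_of_nonneg_of_pos hs.1 hx).ne'
  obtain ⟨ξ, hξ, hmean⟩ := exists_mem_Ioo_rlIntegral_eq_mul hβ hl (continuousOn_rlIntegral hβ' hψ)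
  have hcomp := rlIntegral_rlIntegral hβ hβ' hl.le (by fun_prop) hψ fun s hs =>
    Real.rpow_nonneg (by linarith [hs.1]) _
  rw [add_sub_cancel, Real.Gamma_one, div_one, rlIntegral_one,
    integral_add_rpow (by linarith) hx hl.le, hmean, rlIntegral_add_rpow hξ.1.le hx,
    sub_sub_cancel_left, show α - 2 + 1 = α - 1 by ring,
    show 1 - β + (α - 2) = α - β - 1 by ring] at hcomp
  refine ⟨ξ, hξ, ?_⟩
  have hlt : (l + x) ^ (α - 1) < x ^ (α - 1) :=
    Real.rpow_lt_rpow_of_neg hx (by linarith) (by linarith)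
  have hα1 : α - 1 ≠ 0 := by linarith
  rw [abs_of_neg (sub_neg.2 hlt), add_comm 1 β, Real.Gamma_add_one hβ.ne']
  field_simp at hcomp ⊢
  linear_combination hcomp
end
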